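/- There exists a finite simple graph G and a vertex v of G with deg_G(v) ≥ 2 such that γst(G/v) = γst(G) − deg_G(v) + 1; that is, the lower bound γst(G) − deg_G(v) + 1 ≤ γst(G/v) for non-pendant vertices is tight. -/

import Mathlib

/-- The degree of a vertex `x` in a graph `G`. -/
noncomputable def sdeg {V : Type*} (G : SimpleGraph V) (x : V) : ℕ :=
  (G.neighborSet x).ncard

/-- `D` is a strong dominating set of `G`: every vertex `x ∉ D` has a neighbor
`y ∈ D` with `deg x ≤ deg y`. -/
def IsStrongDominating {V : Type*} (G : SimpleGraph V) (D : Set V) : Prop :=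
  ∀ x ∉ D, ∃ y ∈ D, G.Adj x y ∧ sdeg G x ≤ sdeg G y

/-- The strong domination number of `G`. -/
noncomputable def sdn {V : Type*} (G : SimpleGraph V) : ℕ :=
  sInf {n | ∃ D : Set V, IsStrongDominating G D ∧ D.ncard = n}

/-- Vertex deletion `G - v`: the induced subgraph on the complement of `{v}`. -/
def delVtx {V : Type*} (G : SimpleGraph V) (v : V) : SimpleGraph {x : V // x ≠ v} where
  Adj a b := G.Adj a.1 b.1
  symm := ⟨fun a b h => G.adj_symm h⟩
  loopless := ⟨fun a h => G.irrefl h⟩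

/-- Vertex contraction `G / v`: delete `v` and put a clique on its open neighborhood. -/
def contractVtx {V : Type*} (G : SimpleGraph V) (v : V) : SimpleGraph {x : V // x ≠ v} where
  Adj a b := a ≠ b ∧ (G.Adj a.1 b.1 ∨ (G.Adj v a.1 ∧ G.Adj v b.1))
  symm := by
    constructor
    rintro a b ⟨hab, h | ⟨ha, hb⟩⟩
    · exact ⟨hab.symm, Or.inl h.symm⟩
    · exact ⟨hab.symm, Or.inr ⟨hb, ha⟩⟩
  loopless := by constructor; rintro a ⟨h, -⟩; exact h rfl

/-- `G ⊙ v`: remove all edges between any pair of neighbors of `v`. -/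
def odotVtx {V : Type*} (G : SimpleGraph V) (v : V) : SimpleGraph V where
  Adj x y := G.Adj x y ∧ ¬(G.Adj v x ∧ G.Adj v y)
  symm := by
    constructor
    rintro x y ⟨h, hn⟩
    exact ⟨h.symm, fun hc => hn ⟨hc.2, hc.1⟩⟩
  loopless := by constructor; rintro x ⟨h, -⟩; exact G.irrefl h

/-- Edge contraction `G / uv`: merge `v` into `u`. -/
def contractEdge {V : Type*} (G : SimpleGraph V) (u v : V) : SimpleGraph {x : V // x ≠ v} where
  Adj a b := a ≠ b ∧ (G.Adj a.1 b.1 ∨ (a.1 = u ∧ G.Adj v b.1) ∨ (b.1 = u ∧ G.Adj v a.1))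
  symm := by
    constructor
    rintro a b ⟨hab, h | h | h⟩
    · exact ⟨hab.symm, Or.inl h.symm⟩
    · exact ⟨hab.symm, Or.inr (Or.inr h)⟩
    · exact ⟨hab.symm, Or.inr (Or.inl h)⟩
  loopless := by constructor; rintro a ⟨h, -⟩; exact h rfl

/-- The star `K_{1,n}` with center `none` and leaves `some i`. -/
def starG (n : ℕ) : SimpleGraph (Option (Fin n)) where
  Adj a b := (a = none ∧ b ≠ none) ∨ (a ≠ none ∧ b = none)
  symm := by
    constructor
    rintro a b (⟨h1, h2⟩ | ⟨h1, h2⟩)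
    · exact Or.inr ⟨h2, h1⟩
    · exact Or.inl ⟨h2, h1⟩
  loopless := by
    constructor
    rintro a (⟨h1, h2⟩ | ⟨h1, h2⟩)
    exacts [h2 h1, h1 h2]

/-- The path graph `P_n` on vertices `0, …, n-1`, consecutive integers adjacent. -/
def pathG (n : ℕ) : SimpleGraph (Fin n) where
  Adj i j := i.1 + 1 = j.1 ∨ j.1 + 1 = i.1
  symm := ⟨fun i j h => h.symm⟩
  loopless := by constructor; rintro i (h | h) <;> omega

/-!
The path `0 - 1 - 2 - 3` with `v = 1` is an example. In `P₄` the end vertices `0` and `3` have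
disjoint closed neighbourhoods, so `γst(P₄) = 2`, attained by `{1, 2}`. Contracting `1` gives
the path `0 - 2 - 3`, whose centre alone strongly dominates it, so `γst(P₄/1) = 1 = 2 - 2 + 1`.
-/

instance pathG.instDecidableRelAdj (n : ℕ) : DecidableRel (pathG n).Adj :=
  fun i j => inferInstanceAs (Decidable (i.1 + 1 = j.1 ∨ j.1 + 1 = i.1))

instance contractVtx.instDecidableRelAdj {V : Type*} [DecidableEq V] (G : SimpleGraph V)
    [DecidableRel G.Adj] (v : V) : DecidableRel (contractVtx G v).Adj :=
  fun a b => inferInstanceAs (Decidable (_ ∧ _))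

section StrongDomination

variable {V : Type*} (G : SimpleGraph V)

theorem sdeg_eq_degree (x : V) [Fintype (G.neighborSet x)] : sdeg G x = G.degree x := by
  rw [sdeg, Set.ncard_eq_toFinset_card', ← G.neighborFinset_def, G.card_neighborFinset_eq_degree]

theorem isStrongDominating_coe_finset_iff [Fintype V] [DecidableRel G.Adj] (D : Finset V) :
    IsStrongDominating G D ↔ ∀ x ∉ D, ∃ y ∈ D, G.Adj x y ∧ G.degree x ≤ G.degree y := by
  simp only [IsStrongDominating, Finset.mem_coe, sdeg_eq_degree]

theorem isStrongDominating_univ : IsStrongDominating G Set.univ :=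
  fun _ hx => (hx trivial).elim

variable {G}

theorem IsStrongDominating.exists_mem_eq_or_adj {D : Set V} (hD : IsStrongDominating G D)
    (x : V) : ∃ y ∈ D, y = x ∨ G.Adj x y := by
  by_cases hx : x ∈ D
  · exact ⟨x, hx, Or.inl rfl⟩
  · obtain ⟨y, hy, hxy, -⟩ := hD x hx
    exact ⟨y, hy, Or.inr hxy⟩

theorem sdn_le_ncard {D : Set V} (hD : IsStrongDominating G D) : sdn G ≤ D.ncard :=
  Nat.sInf_le ⟨D, hD, rfl⟩

theorem le_sdn {k : ℕ} (h : ∀ D, IsStrongDominating G D → k ≤ D.ncard) : k ≤ sdn G :=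
  le_csInf ⟨_, _, isStrongDominating_univ G, rfl⟩ (by rintro n ⟨D, hD, rfl⟩; exact h D hD)

theorem one_le_sdn [Finite V] [Nonempty V] : 1 ≤ sdn G := by
  refine le_sdn fun D hD => ?_
  obtain ⟨y, hy, -⟩ := hD.exists_mem_eq_or_adj (Classical.arbitrary V)
  exact Nat.one_le_iff_ne_zero.2 ((Set.ncard_pos D.toFinite).2 ⟨y, hy⟩).ne'

theorem two_le_sdn_of_disjoint_closedNbhd [Finite V] (x z : V)
    (hxz : ∀ y, (y = x ∨ G.Adj x y) → (y = z ∨ G.Adj z y) → False) : 2 ≤ sdn G := by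
  refine le_sdn fun D hD => ?_
  obtain ⟨a, ha, hxa⟩ := hD.exists_mem_eq_or_adj x
  obtain ⟨b, hb, hzb⟩ := hD.exists_mem_eq_or_adj z
  have hab : a ≠ b := by
    rintro rfl
    exact hxz a hxa hzb
  exact (Set.one_lt_ncard D.toFinite).2 ⟨a, ha, b, hb, hab⟩

end StrongDomination

theorem sdn_pathG_four : sdn (pathG 4) = 2 := by
  refine le_antisymm ?_ (two_le_sdn_of_disjoint_closedNbhd 0 3 (by decide))
  have hD : IsStrongDominating (pathG 4) (({1, 2} : Finset (Fin 4)) : Set (Fin 4)) :=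
    (isStrongDominating_coe_finset_iff _ _).2 (by decide)
  exact (sdn_le_ncard hD).trans_eq (by rw [Set.ncard_coe_finset]; decide)

theorem sdn_contractVtx_pathG_four_one : sdn (contractVtx (pathG 4) 1) = 1 := by
  have : Nonempty {x : Fin 4 // x ≠ 1} := ⟨⟨0, by decide⟩⟩
  refine le_antisymm ?_ one_le_sdn
  have hD : IsStrongDominating (contractVtx (pathG 4) 1)
      (({⟨2, by decide⟩} : Finset {x : Fin 4 // x ≠ 1}) : Set {x : Fin 4 // x ≠ 1}) :=
    (isStrongDominating_coe_finset_iff _ _).2 (by decide)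
  exact (sdn_le_ncard hD).trans_eq (by rw [Set.ncard_coe_finset]; decide)

/-- the lower bound γst(G) − deg_G(v) + 1 ≤ γst(G/v) for non-pendant
vertices is tight. -/
theorem sdn_contractVtx_lower_bound_tight :
    ∃ (n : ℕ) (G : SimpleGraph (Fin n)) (v : Fin n),
      2 ≤ sdeg G v ∧ (sdn (contractVtx G v) : ℤ) = (sdn G : ℤ) - (sdeg G v : ℤ) + 1 := by
  have hdeg : sdeg (pathG 4) 1 = 2 := by
    rw [sdeg_eq_degree]
    decide
  refine ⟨4, pathG 4, 1, hdeg.ge, ?_⟩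
  rw [sdn_contractVtx_pathG_four_one, sdn_pathG_four, hdeg]
  norm_num
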